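/- arXiv:1503.02179 — 2 statements merged into one kernel-verified Lean document; each statement's English description precedes it below -/
import Mathlib

section
/- Let n ≥ 2, R₀ > 0, and let F : B_{R₀} → ℝ be a convex continuously differentiable function on the open ball B_{R₀} ⊂ ℝ^{n-1} with F ≥ 0 and F(0) = 0. Define δ(r) = sup_{0<|x'|≤r} F(x')/|x'| and δ₁(r) = sup_{|x'|≤r} |∇F(x')| for 0 < r < R₀. Then ∫₀^{R₀/2} δ(r)/r dr < ∞ if and only if ∫₀^{R₀/2} δ₁(r)/r dr < ∞; that is, δ satisfies the Dini condition at zero if and only if δ₁ does. -/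
/-!
Statement 6: `δ` satisfies the Dini condition at zero iff `δ₁` does
(part (b) of Lemma `Proposition` of the paper).
-/

noncomputable section
open Metric Set Filter Topology
open scoped ENNReal

/-- `δ(r) = sup_{0<|x'|≤r} F(x')/|x'|`. -/
def deltaFn (m : ℕ) (F : EuclideanSpace ℝ (Fin m) → ℝ) (r : ℝ) : ℝ :=
  sSup ((fun x' => F x' / ‖x'‖) '' {x' : EuclideanSpace ℝ (Fin m) | 0 < ‖x'‖ ∧ ‖x'‖ ≤ r})

/-- `δ₁(r) = sup_{|x'|≤r} |∇F(x')|`. -/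
def deltaOneFn (m : ℕ) (F : EuclideanSpace ℝ (Fin m) → ℝ) (r : ℝ) : ℝ :=
  sSup ((fun x' => ‖gradient F x'‖) '' closedBall (0 : EuclideanSpace ℝ (Fin m)) r)

/-!
The mean value inequality and `F 0 = 0` give `F x' ≤ δ₁(r) |x'|`, hence `δ ≤ δ₁`.
Conversely, for `|x'| ≤ r` the gradient inequality of the convex function `F` on the closed ball
of radius `r` around `x'` bounds `r |∇F(x')|` by `sup F - F(x') ≤ 2r δ(2r)` on that ball, as
`F ≥ 0`; so `δ₁(r) ≤ 2 δ(2r)`. The substitution `s = 2r` turns this into the Dini integral of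
`δ` near zero, and away from zero `δ₁` is bounded since `∇F` is continuous on compact balls.
-/

open MeasureTheory

theorem norm_gradient_eq_norm_fderiv {𝕜 E : Type*} [RCLike 𝕜] [NormedAddCommGroup E]
    [InnerProductSpace 𝕜 E] [CompleteSpace E] (f : E → 𝕜) (x : E) :
    ‖gradient f x‖ = ‖fderiv 𝕜 f x‖ := by
  rw [← toDual_gradient, LinearIsometryEquiv.norm_map]

section ConvexGradient

variable {E : Type*} [NormedAddCommGroup E] [NormedSpace ℝ E] {s : Set E} {f : E → ℝ} {x y : E}

theorem ConvexOn.add_fderiv_sub_le (hf : ConvexOn ℝ s f) (hx : x ∈ s) (hy : y ∈ s)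
    (hd : DifferentiableAt ℝ f x) : f x + fderiv ℝ f x (y - x) ≤ f y := by
  have hline : HasDerivAt (f ∘ AffineMap.lineMap (k := ℝ) x y) (fderiv ℝ f x (y - x)) 0 := by
    have hd' : HasFDerivAt f (fderiv ℝ f x) (AffineMap.lineMap x y (0 : ℝ)) := by
      simpa using hd.hasFDerivAt
    exact hd'.comp_hasDerivAt _ AffineMap.hasDerivAt_lineMap
  have := (hf.comp_affineMap (AffineMap.lineMap x y)).le_slope_of_hasDerivAt
    (by simpa using hx) (by simpa using hy) zero_lt_one hline
  simp only [slope_def_field, Function.comp_apply, AffineMap.lineMap_apply_one,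
    AffineMap.lineMap_apply_zero, sub_zero, div_one] at this
  linarith

theorem ConvexOn.norm_fderiv_le_of_forall_le {r M : ℝ} (hf : ConvexOn ℝ s f) (hr : 0 < r)
    (hball : closedBall x r ⊆ s) (hd : DifferentiableAt ℝ f x)
    (hM : ∀ y ∈ closedBall x r, f y ≤ M) :
    ‖fderiv ℝ f x‖ ≤ (M - f x) / r := by
  have hle : ∀ v ∈ closedBall (0 : E) r, fderiv ℝ f x v ≤ M - f x := fun v hv => by
    have hxv : x + v ∈ closedBall x r := by simpa using hv
    have := hf.add_fderiv_sub_le (hball (mem_closedBall_self hr.le)) (hball hxv) hd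
    rw [add_sub_cancel_left] at this
    linarith [hM _ hxv]
  refine ContinuousLinearMap.opNorm_bound_of_ball_bound hr _ _ fun v hv => abs_le.2 ⟨?_, hle v hv⟩
  have := hle (-v) (by simpa using hv)
  rw [map_neg] at this
  linarith

end ConvexGradient

section Delta

variable {m : ℕ} {F : EuclideanSpace ℝ (Fin m) → ℝ} {R₀ ρ : ℝ}

local notation "E" => EuclideanSpace ℝ (Fin m)

theorem deltaOneFn_nonneg : 0 ≤ deltaOneFn m F ρ :=
  Real.sSup_nonneg <| by
    rintro _ ⟨x, -, rfl⟩
    exact norm_nonneg _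

theorem norm_fderiv_le_deltaOneFn (hF : ContDiffOn ℝ 1 F (ball 0 R₀)) (hρ : ρ < R₀) {x : E}
    (hx : x ∈ closedBall 0 ρ) : ‖fderiv ℝ F x‖ ≤ deltaOneFn m F ρ := by
  have hcont : ContinuousOn (fun x => ‖gradient F x‖) (closedBall (0 : E) ρ) := by
    simp_rw [norm_gradient_eq_norm_fderiv]
    exact ((hF.continuousOn_fderiv_of_isOpen isOpen_ball le_rfl).mono
      (closedBall_subset_ball hρ)).norm
  rw [← norm_gradient_eq_norm_fderiv]
  exact le_csSup ((isCompact_closedBall _ _).image_of_continuousOn hcont).bddAbove ⟨x, hx, rfl⟩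

theorem deltaOneFn_mono (hF : ContDiffOn ℝ 1 F (ball 0 R₀)) {ρ' : ℝ} (hρρ' : ρ ≤ ρ')
    (hρ' : ρ' < R₀) : deltaOneFn m F ρ ≤ deltaOneFn m F ρ' := by
  refine Real.sSup_le ?_ deltaOneFn_nonneg
  rintro _ ⟨x, hx, rfl⟩
  simp only [norm_gradient_eq_norm_fderiv]
  exact norm_fderiv_le_deltaOneFn hF hρ' (closedBall_subset_closedBall hρρ' hx)

theorem le_deltaOneFn_mul_norm (hF : ContDiffOn ℝ 1 F (ball 0 R₀)) (hF0 : F 0 = 0)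
    (hρ : ρ < R₀) {y : E} (hy : ‖y‖ ≤ ρ) : F y ≤ deltaOneFn m F ρ * ‖y‖ := by
  have hdiff : ∀ x ∈ closedBall (0 : E) ρ, DifferentiableAt ℝ F x := fun x hx =>
    (hF.differentiableOn one_ne_zero).differentiableAt
      (isOpen_ball.mem_nhds (closedBall_subset_ball hρ hx))
  have hmvt := (convex_closedBall (0 : E) ρ).norm_image_sub_le_of_norm_fderiv_le hdiff
    (fun x hx => norm_fderiv_le_deltaOneFn hF hρ hx)
    (mem_closedBall_self ((norm_nonneg y).trans hy)) (mem_closedBall_zero_iff.2 hy)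
  rw [hF0, sub_zero, sub_zero] at hmvt
  exact (le_abs_self _).trans hmvt

theorem deltaOneFn_mem_upperBounds (hF : ContDiffOn ℝ 1 F (ball 0 R₀)) (hF0 : F 0 = 0)
    (hρ : ρ < R₀) :
    deltaOneFn m F ρ ∈ upperBounds ((fun x => F x / ‖x‖) '' {x : E | 0 < ‖x‖ ∧ ‖x‖ ≤ ρ}) := by
  rintro _ ⟨y, ⟨hy₀, hy⟩, rfl⟩
  rw [div_le_iff₀ hy₀]
  exact le_deltaOneFn_mul_norm hF hF0 hρ hy

theorem deltaFn_le_deltaOneFn (hF : ContDiffOn ℝ 1 F (ball 0 R₀)) (hF0 : F 0 = 0)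
    (hρ : ρ < R₀) : deltaFn m F ρ ≤ deltaOneFn m F ρ :=
  Real.sSup_le (deltaOneFn_mem_upperBounds hF hF0 hρ) deltaOneFn_nonneg

theorem deltaFn_nonneg (hFnn : ∀ x ∈ ball (0 : E) R₀, 0 ≤ F x) (hρ : ρ < R₀) :
    0 ≤ deltaFn m F ρ :=
  Real.sSup_nonneg <| by
    rintro _ ⟨y, ⟨-, hy⟩, rfl⟩
    exact div_nonneg (hFnn y (mem_ball_zero_iff.2 (hy.trans_lt hρ))) (norm_nonneg _)

theorem le_deltaFn_mul_norm (hF : ContDiffOn ℝ 1 F (ball 0 R₀)) (hF0 : F 0 = 0)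
    (hρ : ρ < R₀) {y : E} (hy : ‖y‖ ≤ ρ) : F y ≤ deltaFn m F ρ * ‖y‖ := by
  rcases (norm_nonneg y).eq_or_lt with hy₀ | hy₀
  · rw [← hy₀, norm_eq_zero.1 hy₀.symm, hF0, mul_zero]
  · rw [← div_le_iff₀ hy₀]
    exact le_csSup ⟨_, deltaOneFn_mem_upperBounds hF hF0 hρ⟩ ⟨y, ⟨hy₀, hy⟩, rfl⟩

theorem deltaOneFn_le_two_mul_deltaFn (hFconv : ConvexOn ℝ (ball (0 : E) R₀) F)
    (hF : ContDiffOn ℝ 1 F (ball 0 R₀)) (hFnn : ∀ x ∈ ball (0 : E) R₀, 0 ≤ F x)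
    (hF0 : F 0 = 0) {r : ℝ} (hr : 0 < r) (h2r : 2 * r < R₀) :
    deltaOneFn m F r ≤ 2 * deltaFn m F (2 * r) := by
  have hδ := deltaFn_nonneg hFnn h2r
  refine Real.sSup_le ?_ (by positivity)
  rintro _ ⟨x, hx, rfl⟩
  have hsub : closedBall x r ⊆ closedBall (0 : E) (2 * r) := by
    refine closedBall_subset_closedBall' ?_
    rw [dist_zero_right]
    linarith [mem_closedBall_zero_iff.1 hx]
  have hx' : x ∈ ball (0 : E) R₀ := closedBall_subset_ball (by linarith) hx
  have hbound : ‖fderiv ℝ F x‖ ≤ (2 * r * deltaFn m F (2 * r) - F x) / r := by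
    refine hFconv.norm_fderiv_le_of_forall_le hr
      (hsub.trans (closedBall_subset_ball h2r))
      ((hF.differentiableOn one_ne_zero).differentiableAt (isOpen_ball.mem_nhds hx'))
      fun y hy => ?_
    have hy' := mem_closedBall_zero_iff.1 (hsub hy)
    calc F y ≤ deltaFn m F (2 * r) * ‖y‖ := le_deltaFn_mul_norm hF hF0 h2r hy'
      _ ≤ 2 * r * deltaFn m F (2 * r) := by nlinarith
  simp only [norm_gradient_eq_norm_fderiv]
  refine hbound.trans ?_
  rw [div_le_iff₀ hr]
  linarith [hFnn x hx']

end Delta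

theorem lintegral_Ioo_ofReal_mul_comp_mul_left (g : ℝ → ℝ≥0∞) {c : ℝ} (hc : 0 < c) (a : ℝ) :
    ∫⁻ r in Ioo 0 a, ENNReal.ofReal c * g (c * r) = ∫⁻ s in Ioo 0 (c * a), g s := by
  have := lintegral_image_eq_lintegral_abs_deriv_mul (s := Ioo 0 a) measurableSet_Ioo
    (fun r _ => ((hasDerivAt_id r).const_mul c).hasDerivWithinAt)
    (mul_right_injective₀ hc.ne').injOn g
  simp only [id, mul_one, abs_of_pos hc, image_mul_left_Ioo hc, mul_zero] at this
  exact this.symm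

theorem lintegral_ofReal_div_lt_top_of_le_mul_comp_two_mul {f g : ℝ → ℝ} {a C M : ℝ}
    (hC : 0 ≤ C) (hM : 0 ≤ M) (hsmall : ∀ r ∈ Ioo 0 (a / 2), g r ≤ C * f (2 * r))
    (hlarge : ∀ r ∈ Ico (a / 2) a, g r ≤ M)
    (hf : ∫⁻ r in Ioo 0 a, ENNReal.ofReal (f r / r) < ∞) :
    ∫⁻ r in Ioo 0 a, ENNReal.ofReal (g r / r) < ∞ := by
  have hsplit : Ioo 0 a ⊆ Ioo 0 (a / 2) ∪ Ico (a / 2) a := fun r ⟨hr₀, hra⟩ =>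
    (lt_or_ge r (a / 2)).imp (fun h => ⟨hr₀, h⟩) fun h => ⟨h, hra⟩
  have hsmall_int : ∫⁻ r in Ioo 0 (a / 2), ENNReal.ofReal (g r / r) < ∞ := by
    calc ∫⁻ r in Ioo 0 (a / 2), ENNReal.ofReal (g r / r)
        ≤ ∫⁻ r in Ioo 0 (a / 2),
            ENNReal.ofReal C * (ENNReal.ofReal 2 * ENNReal.ofReal (f (2 * r) / (2 * r))) := by
          refine setLIntegral_mono' measurableSet_Ioo fun r ⟨hr₀, hr⟩ => ?_
          rw [← ENNReal.ofReal_mul zero_le_two, ← ENNReal.ofReal_mul hC]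
          refine ENNReal.ofReal_le_ofReal ?_
          calc g r / r ≤ C * f (2 * r) / r :=
                div_le_div_of_nonneg_right (hsmall r ⟨hr₀, hr⟩) hr₀.le
            _ = C * (2 * (f (2 * r) / (2 * r))) := by field_simp
      _ = ENNReal.ofReal C * ∫⁻ r in Ioo 0 a, ENNReal.ofReal (f r / r) := by
          rw [lintegral_const_mul' _ _ ENNReal.ofReal_ne_top,
            lintegral_Ioo_ofReal_mul_comp_mul_left (fun s => ENNReal.ofReal (f s / s)) two_pos,
            mul_div_cancel₀ _ two_ne_zero]
      _ < ∞ := ENNReal.mul_lt_top ENNReal.ofReal_lt_top hf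
  have hlarge_int : ∫⁻ r in Ico (a / 2) a, ENNReal.ofReal (g r / r) < ∞ := by
    calc ∫⁻ r in Ico (a / 2) a, ENNReal.ofReal (g r / r)
        ≤ ∫⁻ _ in Ico (a / 2) a, ENNReal.ofReal (M / (a / 2)) := by
          refine setLIntegral_mono' measurableSet_Ico fun r ⟨hr, hra⟩ => ?_
          have ha : 0 < a / 2 := by linarith
          refine ENNReal.ofReal_le_ofReal ?_
          calc g r / r ≤ M / r :=
                div_le_div_of_nonneg_right (hlarge r ⟨hr, hra⟩) (ha.trans_le hr).le
            _ ≤ M / (a / 2) := div_le_div_of_nonneg_left hM ha hr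
      _ = ENNReal.ofReal (M / (a / 2)) * volume (Ico (a / 2) a) := setLIntegral_const _ _
      _ < ∞ := ENNReal.mul_lt_top ENNReal.ofReal_lt_top (by simp)
  calc ∫⁻ r in Ioo 0 a, ENNReal.ofReal (g r / r)
      ≤ ∫⁻ r in Ioo 0 (a / 2) ∪ Ico (a / 2) a, ENNReal.ofReal (g r / r) :=
        lintegral_mono_set hsplit
    _ ≤ _ := lintegral_union_le _ _ _
    _ < ∞ := ENNReal.add_lt_top.2 ⟨hsmall_int, hlarge_int⟩

theorem delta_dini_iff_general
    (n : ℕ) (R₀ : ℝ)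
    (F : EuclideanSpace ℝ (Fin (n - 1)) → ℝ)
    (hFconv : ConvexOn ℝ (ball (0 : EuclideanSpace ℝ (Fin (n - 1))) R₀) F)
    (hFdiff : ContDiffOn ℝ 1 F (ball (0 : EuclideanSpace ℝ (Fin (n - 1))) R₀))
    (hFnn : ∀ x' ∈ ball (0 : EuclideanSpace ℝ (Fin (n - 1))) R₀, 0 ≤ F x')
    (hF0 : F 0 = 0) :
    (∫⁻ r in Set.Ioo (0 : ℝ) (R₀ / 2), ENNReal.ofReal (deltaFn (n - 1) F r / r)) < ⊤ ↔
      (∫⁻ r in Set.Ioo (0 : ℝ) (R₀ / 2), ENNReal.ofReal (deltaOneFn (n - 1) F r / r)) < ⊤ := by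
  constructor
  · refine lintegral_ofReal_div_lt_top_of_le_mul_comp_two_mul zero_le_two deltaOneFn_nonneg
      (fun r ⟨hr₀, hr⟩ => deltaOneFn_le_two_mul_deltaFn hFconv hFdiff hFnn hF0 hr₀ (by linarith))
      fun r ⟨hr, hr'⟩ => deltaOneFn_mono hFdiff hr'.le (by linarith)
  · refine fun h => lt_of_le_of_lt (setLIntegral_mono' measurableSet_Ioo fun r ⟨hr₀, hr⟩ => ?_) h
    exact ENNReal.ofReal_le_ofReal
      (div_le_div_of_nonneg_right (deltaFn_le_deltaOneFn hFdiff hF0 (by linarith)) hr₀.le)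

theorem delta_dini_iff
    (n : ℕ) (hn : 2 ≤ n) (R₀ : ℝ) (hR₀ : 0 < R₀)
    (F : EuclideanSpace ℝ (Fin (n - 1)) → ℝ)
    (hFconv : ConvexOn ℝ (ball (0 : EuclideanSpace ℝ (Fin (n - 1))) R₀) F)
    (hFdiff : ContDiffOn ℝ 1 F (ball (0 : EuclideanSpace ℝ (Fin (n - 1))) R₀))
    (hFnn : ∀ x' ∈ ball (0 : EuclideanSpace ℝ (Fin (n - 1))) R₀, 0 ≤ F x')
    (hF0 : F 0 = 0) :
    (∫⁻ r in Set.Ioo (0 : ℝ) (R₀ / 2), ENNReal.ofReal (deltaFn (n - 1) F r / r)) < ⊤ ↔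
      (∫⁻ r in Set.Ioo (0 : ℝ) (R₀ / 2), ENNReal.ofReal (deltaOneFn (n - 1) F r / r)) < ⊤ :=
  delta_dini_iff_general n R₀ F hFconv hFdiff hFnn hF0
end
end

section
/- Let n ≥ 2, R₀ > 0, and let F : B_{R₀} → ℝ be a convex continuously differentiable function on the open ball B_{R₀} ⊂ ℝ^{n-1} with F ≥ 0 and F(0) = 0. Define δ(r) = sup_{0<|x'|≤r} F(x')/|x'| and δ₁(r) = sup_{|x'|≤r} |∇F(x')|. Then for every r ∈ (0, R₀/2) one has δ(2r) ≥ δ₁(r)/2. (Indeed, if x'_* with |x'_*| ≤ r satisfies |∇F(x'_*)| = δ₁(r) and z' = x'_* + r ∇F(x'_*)/|∇F(x'_*)|, then |z'| ≤ 2r and F(z') ≥ r δ₁(r).) -/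
/-!
Convexity gives the subgradient inequality `F y ≥ F x + ⟪∇F x, y - x⟫`. Stepping a distance `r`
from `x` in the direction of `∇F x` reaches a point `z` with `‖z‖ ≤ ‖x‖ + r ≤ 2r` and
`F z ≥ F x + r ‖∇F x‖ ≥ r ‖∇F x‖`, so `F z / ‖z‖ ≥ ‖∇F x‖ / 2`. The same inequality at `y = 0`
gives `F x ≤ ‖∇F x‖ ‖x‖`; as `∇F` is continuous, this keeps the supremum defining `δ(2r)` finite.
-/

noncomputable section
open Metric Set Filter Topology

open InnerProductSpace

section Subgradient

variable {E : Type*} [NormedAddCommGroup E] {s : Set E} {F : E → ℝ} {x y : E}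

theorem ConvexOn.add_fderiv_sub_le_s8 [NormedSpace ℝ E] {f' : E →L[ℝ] ℝ} (hF : ConvexOn ℝ s F)
    (hx : x ∈ s) (hy : y ∈ s) (hf' : HasFDerivAt F f' x) : F x + f' (y - x) ≤ F y := by
  let γ : ℝ →ᵃ[ℝ] E := AffineMap.lineMap x y
  have hγ : HasDerivAt (F ∘ γ) (f' (y - x)) 0 :=
    HasFDerivAt.comp_hasDerivAt (x := 0) (by simpa [γ] using hf') AffineMap.hasDerivAt_lineMap
  have hslope := (hF.comp_affineMap γ).le_slope_of_hasDerivAt (x := 0) (y := 1)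
    (by simpa [γ] using hx) (by simpa [γ] using hy) one_pos hγ
  simp only [slope_def_field, Function.comp_apply, AffineMap.lineMap_apply_one,
    AffineMap.lineMap_apply_zero, sub_zero, div_one, γ] at hslope
  linarith

theorem ConvexOn.add_inner_gradient_sub_le [InnerProductSpace ℝ E] [CompleteSpace E]
    (hF : ConvexOn ℝ s F) (hx : x ∈ s) (hy : y ∈ s) (hd : DifferentiableAt ℝ F x) :
    F x + ⟪gradient F x, y - x⟫_ℝ ≤ F y := by
  simpa only [inner_gradient_left] using hF.add_fderiv_sub_le_s8 hx hy hd.hasFDerivAt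

end Subgradient

section Gradient

variable {E : Type*} [NormedAddCommGroup E] [InnerProductSpace ℝ E] {r : ℝ}

theorem norm_div_norm_smul_le (hr : 0 ≤ r) (g : E) : ‖(r / ‖g‖) • g‖ ≤ r := by
  rcases eq_or_ne g 0 with rfl | hg
  · simpa using hr
  · rw [norm_smul, Real.norm_of_nonneg (by positivity), div_mul_cancel₀ _ (norm_ne_zero_iff.2 hg)]

theorem inner_div_norm_smul_self (r : ℝ) (g : E) : ⟪g, (r / ‖g‖) • g⟫_ℝ = r * ‖g‖ := by
  rcases eq_or_ne g 0 with rfl | hg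
  · simp
  · rw [real_inner_smul_right, real_inner_self_eq_norm_sq]
    field_simp

variable [CompleteSpace E] {s : Set E} {F : E → ℝ} {x : E}

theorem ConvexOn.add_mul_norm_gradient_le (hF : ConvexOn ℝ s F) (hx : x ∈ s)
    (hd : DifferentiableAt ℝ F x) (hz : x + (r / ‖gradient F x‖) • gradient F x ∈ s) :
    F x + r * ‖gradient F x‖ ≤ F (x + (r / ‖gradient F x‖) • gradient F x) := by
  have := hF.add_inner_gradient_sub_le hx hz hd
  rwa [add_sub_cancel_left, inner_div_norm_smul_self] at this

theorem ConvexOn.le_norm_gradient_mul_norm (hF : ConvexOn ℝ s F) (hx : x ∈ s) (h0 : (0 : E) ∈ s)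
    (hF0 : F 0 = 0) (hd : DifferentiableAt ℝ F x) : F x ≤ ‖gradient F x‖ * ‖x‖ := by
  have := hF.add_inner_gradient_sub_le hx h0 hd
  rw [hF0, zero_sub, inner_neg_right] at this
  linarith [real_inner_le_norm (gradient F x) x]

theorem ContDiffOn.continuousOn_gradient (hF : ContDiffOn ℝ 1 F s) (hs : IsOpen s) :
    ContinuousOn (gradient F) s :=
  (toDual ℝ E).symm.continuous.comp_continuousOn (hF.continuousOn_fderiv_of_isOpen hs le_rfl)

end Gradient

section Ball

variable {E : Type*} [NormedAddCommGroup E] [InnerProductSpace ℝ E] [CompleteSpace E]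
  {F : E → ℝ} {R r : ℝ}

theorem ConvexOn.gradient_step_of_ball (hF : ConvexOn ℝ (ball 0 R) F)
    (hd : DifferentiableOn ℝ F (ball 0 R)) (hnn : ∀ y ∈ ball 0 R, 0 ≤ F y) (hr : 0 ≤ r)
    (hR : 2 * r < R) {x : E} (hx : ‖x‖ ≤ r) :
    ‖x + (r / ‖gradient F x‖) • gradient F x‖ ≤ 2 * r ∧
      r * ‖gradient F x‖ ≤ F (x + (r / ‖gradient F x‖) • gradient F x) := by
  have hxR : x ∈ ball 0 R := mem_ball_zero_iff.2 (by linarith)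
  have hz : ‖x + (r / ‖gradient F x‖) • gradient F x‖ ≤ 2 * r :=
    (norm_add_le _ _).trans (by linarith [norm_div_norm_smul_le hr (gradient F x)])
  have hzR : x + (r / ‖gradient F x‖) • gradient F x ∈ ball 0 R := mem_ball_zero_iff.2 (by linarith)
  have hstep := hF.add_mul_norm_gradient_le hxR (hd.differentiableAt (isOpen_ball.mem_nhds hxR)) hzR
  exact ⟨hz, by linarith [hnn x hxR]⟩

theorem ConvexOn.exists_le_mul_norm_of_ball [ProperSpace E] {ρ : ℝ}
    (hF : ConvexOn ℝ (ball 0 R) F) (hF1 : ContDiffOn ℝ 1 F (ball 0 R)) (hF0 : F 0 = 0)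
    (hρ : ρ < R) : ∃ C, ∀ x : E, ‖x‖ ≤ ρ → F x ≤ C * ‖x‖ := by
  obtain ⟨C, hC⟩ := (isCompact_closedBall (0 : E) ρ).exists_bound_of_continuousOn
    ((hF1.continuousOn_gradient isOpen_ball).mono (closedBall_subset_ball hρ))
  refine ⟨C, fun x hx => ?_⟩
  have hxR : x ∈ ball 0 R := mem_ball_zero_iff.2 (by linarith)
  have h0R : (0 : E) ∈ ball 0 R := mem_ball_self (by linarith [norm_nonneg x])
  calc F x ≤ ‖gradient F x‖ * ‖x‖ := hF.le_norm_gradient_mul_norm hxR h0R hF0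
        ((hF1.differentiableOn one_ne_zero).differentiableAt (isOpen_ball.mem_nhds hxR))
    _ ≤ C * ‖x‖ := by gcongr; exact hC x (mem_closedBall_zero_iff.2 hx)

end Ball

section Delta

variable {m : ℕ} {F : EuclideanSpace ℝ (Fin m) → ℝ} {ρ : ℝ}

theorem deltaFn_nonneg_s8 (hF : ∀ x : EuclideanSpace ℝ (Fin m), ‖x‖ ≤ ρ → 0 ≤ F x) :
    0 ≤ deltaFn m F ρ :=
  Real.sSup_nonneg <| by
    rintro _ ⟨x, ⟨-, hx⟩, rfl⟩
    exact div_nonneg (hF x hx) (norm_nonneg x)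

theorem le_deltaFn_of_mul_le {C c : ℝ} {z : EuclideanSpace ℝ (Fin m)}
    (hC : ∀ x : EuclideanSpace ℝ (Fin m), ‖x‖ ≤ ρ → F x ≤ C * ‖x‖)
    (hF : ∀ x : EuclideanSpace ℝ (Fin m), ‖x‖ ≤ ρ → 0 ≤ F x) (hρ : 0 < ρ) (hc : 0 ≤ c)
    (hz : ‖z‖ ≤ ρ) (hFz : c * ρ ≤ F z) : c ≤ deltaFn m F ρ := by
  rcases hc.eq_or_lt with rfl | hc
  · exact deltaFn_nonneg_s8 hF
  have hz0 : 0 < ‖z‖ := by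
    by_contra! h
    have hFz0 := hC z hz
    rw [le_antisymm h (norm_nonneg z), mul_zero] at hFz0
    nlinarith [mul_pos hc hρ]
  have hbdd : BddAbove ((fun x => F x / ‖x‖) '' {x | 0 < ‖x‖ ∧ ‖x‖ ≤ ρ}) :=
    ⟨C, by rintro _ ⟨x, ⟨hx0, hx⟩, rfl⟩; exact (div_le_iff₀ hx0).2 (hC x hx)⟩
  calc c ≤ F z / ‖z‖ := by rw [le_div_iff₀ hz0]; nlinarith
    _ ≤ deltaFn m F ρ := le_csSup hbdd ⟨z, ⟨hz0, hz⟩, rfl⟩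

theorem deltaOneFn_le {r a : ℝ} (hr : 0 ≤ r)
    (h : ∀ x : EuclideanSpace ℝ (Fin m), ‖x‖ ≤ r → ‖gradient F x‖ ≤ a) : deltaOneFn m F r ≤ a :=
  csSup_le ((nonempty_closedBall.2 hr).image _) <| by
    rintro _ ⟨x, hx, rfl⟩
    exact h x (mem_closedBall_zero_iff.1 hx)

end Delta

theorem delta_two_r_ge_half_delta_one_general
    (n : ℕ) (R₀ : ℝ)
    (F : EuclideanSpace ℝ (Fin (n - 1)) → ℝ)
    (hFconv : ConvexOn ℝ (ball (0 : EuclideanSpace ℝ (Fin (n - 1))) R₀) F)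
    (hFdiff : ContDiffOn ℝ 1 F (ball (0 : EuclideanSpace ℝ (Fin (n - 1))) R₀))
    (hFnn : ∀ x' ∈ ball (0 : EuclideanSpace ℝ (Fin (n - 1))) R₀, 0 ≤ F x')
    (hF0 : F 0 = 0) :
    ∀ r ∈ Set.Ioo (0 : ℝ) (R₀ / 2),
      deltaOneFn (n - 1) F r / 2 ≤ deltaFn (n - 1) F (2 * r) ∧
      ∀ xstar : EuclideanSpace ℝ (Fin (n - 1)), ‖xstar‖ ≤ r →
        ‖gradient F xstar‖ = deltaOneFn (n - 1) F r → gradient F xstar ≠ 0 →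
        ‖xstar + (r / ‖gradient F xstar‖) • gradient F xstar‖ ≤ 2 * r ∧
        r * deltaOneFn (n - 1) F r ≤
          F (xstar + (r / ‖gradient F xstar‖) • gradient F xstar) := by
  rintro r ⟨hr0, hr⟩
  have hR : 2 * r < R₀ := by linarith
  have hstep := fun x (hx : ‖x‖ ≤ r) =>
    hFconv.gradient_step_of_ball (hFdiff.differentiableOn one_ne_zero) hFnn hr0.le hR hx
  refine ⟨?_, fun x hx hmax _ => hmax ▸ hstep x hx⟩
  obtain ⟨C, hC⟩ := hFconv.exists_le_mul_norm_of_ball hFdiff hF0 hR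
  have hnn : ∀ y : EuclideanSpace ℝ (Fin (n - 1)), ‖y‖ ≤ 2 * r → 0 ≤ F y :=
    fun y hy => hFnn y (mem_ball_zero_iff.2 (by linarith))
  have hδ₁ := deltaOneFn_le (a := 2 * deltaFn (n - 1) F (2 * r)) hr0.le fun x hx => by
    have := le_deltaFn_of_mul_le (c := ‖gradient F x‖ / 2) hC hnn (by positivity) (by positivity)
      (hstep x hx).1 (by linarith [(hstep x hx).2])
    linarith
  linarith

theorem delta_two_r_ge_half_delta_one
    (n : ℕ) (hn : 2 ≤ n) (R₀ : ℝ) (hR₀ : 0 < R₀)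
    (F : EuclideanSpace ℝ (Fin (n - 1)) → ℝ)
    (hFconv : ConvexOn ℝ (ball (0 : EuclideanSpace ℝ (Fin (n - 1))) R₀) F)
    (hFdiff : ContDiffOn ℝ 1 F (ball (0 : EuclideanSpace ℝ (Fin (n - 1))) R₀))
    (hFnn : ∀ x' ∈ ball (0 : EuclideanSpace ℝ (Fin (n - 1))) R₀, 0 ≤ F x')
    (hF0 : F 0 = 0) :
    ∀ r ∈ Set.Ioo (0 : ℝ) (R₀ / 2),
      deltaOneFn (n - 1) F r / 2 ≤ deltaFn (n - 1) F (2 * r) ∧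
      ∀ xstar : EuclideanSpace ℝ (Fin (n - 1)), ‖xstar‖ ≤ r →
        ‖gradient F xstar‖ = deltaOneFn (n - 1) F r → gradient F xstar ≠ 0 →
        ‖xstar + (r / ‖gradient F xstar‖) • gradient F xstar‖ ≤ 2 * r ∧
        r * deltaOneFn (n - 1) F r ≤
          F (xstar + (r / ‖gradient F xstar‖) • gradient F xstar) :=
  delta_two_r_ge_half_delta_one_general n R₀ F hFconv hFdiff hFnn hF0
end
end
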